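/- Verification of the ODE satisfied by the dressed operator: in A⟦u⟧, set E := (1/3)·(X³ + s⁻¹·X² + X·s⁻¹·X + X²·s⁻¹) and D := s⁻¹ + X. Then O·(E − (1/3)D³) − (E − (1/3)D³)·O = s⁻¹·Φ, and moreover s⁻¹·Φ equals the u-derivative of O; that is, O satisfies dO/du = [O, E − (1/3)D̃³], which is the key computation in the proof that the dressing operator conjugates the operator 𝓑 into its leading part 𝓑̃. -/

import Mathlib

/-!
Grade `A` by the adjoint action of `h`: `s` has weight `1`, so `s⁻¹` has weight `-1` and the
`n`-th coefficient `s⁻²ⁿ⁺¹/n!` of `O` has weight `1 - 2n`. Hence `ad (C h)` acts on `O` as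
`1 - 2u d/du`, and since `dO/du = s⁻²O` this reads `[C h, O] = (1 - 2s⁻²u) O`. As
`Y = -(1 - 2s⁻²u)⁻¹` commutes with `O`, the anticommutator defining `X` gives `[O, X] = -O`.
Finally `E - D³/3 = -(s⁻³ + s⁻²X + s⁻¹Xs⁻¹ + Xs⁻²)/3` and `s⁻¹` commutes with `O`, so the
commutator collapses to `s⁻²O = s⁻¹Φ`, which is `dO/du` by `d/du e^{u/s²} = s⁻² e^{u/s²}`.
-/

open PowerSeries

noncomputable def psDeriv {A : Type*} [Ring A] (F : PowerSeries A) : PowerSeries A :=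
  PowerSeries.mk fun n => (n + 1 : ℕ) • PowerSeries.coeff (n + 1) F

namespace PowerSeries

variable {R : Type*} [Ring R]

theorem commute_of_commute_coeff {f g : R⟦X⟧} (h : ∀ i j, Commute (coeff i f) (coeff j g)) :
    Commute f g := by
  ext n
  rw [coeff_mul, coeff_mul, ← Finset.Nat.sum_antidiagonal_swap]
  exact Finset.sum_congr rfl fun p _ => (h p.2 p.1).eq

theorem commute_C_of_commute_coeff {a : R} {f : R⟦X⟧} (h : ∀ n, Commute a (coeff n f)) :
    Commute (C a) f :=
  commute_of_commute_coeff fun i j => by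
    rw [coeff_C]
    split_ifs
    exacts [h j, Commute.zero_left _]

theorem one_sub_C_mul_X_mul_mk_pow (b : R) : (1 - C b * X) * mk (b ^ ·) = 1 := by
  ext (_ | n) <;> simp [sub_mul, mul_assoc, coeff_succ_X_mul, pow_succ']

theorem mk_pow_mul_one_sub_C_mul_X (b : R) : mk (b ^ ·) * (1 - C b * X) = 1 := by
  ext (_ | n) <;> simp [mul_sub, ← mul_assoc, coeff_succ_mul_X, pow_succ]

theorem lie_C (a : R) (f : R⟦X⟧) : ⁅C a, f⁆ = mk fun n => ⁅a, coeff n f⁆ := by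
  ext n
  simp [Ring.lie_def, coeff_C_mul, coeff_mul_C]

noncomputable def expScaled [Algebra ℚ R] (b : R) : R⟦X⟧ :=
  mk fun n => ((1 : ℚ) / n.factorial) • b ^ n

theorem coeff_C_mul_expScaled [Algebra ℚ R] (a b : R) (n : ℕ) :
    coeff n (C a * expScaled b) = ((1 : ℚ) / n.factorial) • (a * b ^ n) := by
  rw [coeff_C_mul, expScaled, coeff_mk, mul_smul_comm]

theorem commute_C_mul_expScaled_mk_pow [Algebra ℚ R] {a b c : R} (ha : Commute a c)
    (hb : Commute b c) : Commute (C a * expScaled b) (mk (c ^ ·)) :=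
  commute_of_commute_coeff fun i j => by
    rw [coeff_C_mul_expScaled, coeff_mk]
    exact ((ha.pow_right j).mul_left (hb.pow_pow i j)).smul_left _

theorem commute_C_C_mul_expScaled [Algebra ℚ R] {a b c : R} (ha : Commute c a)
    (hb : Commute c b) : Commute (C c) (C a * expScaled b) :=
  commute_C_of_commute_coeff fun n => by
    rw [coeff_C_mul_expScaled]
    exact (ha.mul_right (hb.pow_right n)).smul_right _

end PowerSeries

section Derivative

variable {R : Type*} [Ring R]

theorem X_mul_psDeriv (f : R⟦X⟧) : X * psDeriv f = mk fun n => n • coeff n f := by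
  ext (_ | n) <;> simp [psDeriv, coeff_succ_X_mul]

theorem psDeriv_C_mul (a : R) (f : R⟦X⟧) : psDeriv (C a * f) = C a * psDeriv f := by
  ext n
  simp only [psDeriv, coeff_mk, coeff_C_mul, mul_smul_comm]

theorem psDeriv_expScaled [Algebra ℚ R] (b : R) : psDeriv (expScaled b) = C b * expScaled b := by
  ext n
  simp only [psDeriv, expScaled, coeff_mk, coeff_C_mul, mul_smul_comm, ← pow_succ',
    ← Nat.cast_smul_eq_nsmul ℚ, smul_smul]
  congr 1
  rw [Nat.factorial_succ]
  push_cast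
  field_simp

end Derivative

section AdWeight

variable {R : Type*} [Ring R]

def HasAdWeight (h : R) (p : ℤ) (a : R) : Prop := ⁅h, a⁆ = p • a

namespace HasAdWeight

variable {h a b : R} {p q : ℤ}

theorem mul (ha : HasAdWeight h p a) (hb : HasAdWeight h q b) :
    HasAdWeight h (p + q) (a * b) := by
  unfold HasAdWeight at *
  calc ⁅h, a * b⁆ = ⁅h, a⁆ * b + a * ⁅h, b⁆ := by simp only [Ring.lie_def]; noncomm_ring
    _ = (p + q) • (a * b) := by rw [ha, hb, smul_mul_assoc, mul_smul_comm, add_smul]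

theorem pow (ha : HasAdWeight h p a) (n : ℕ) : HasAdWeight h (n * p) (a ^ n) := by
  induction n with
  | zero => simp [HasAdWeight, Ring.lie_def]
  | succ n ih => simpa [pow_succ, add_mul] using ih.mul ha

theorem of_mul_eq_one (ha : HasAdWeight h p a) (hab : a * b = 1) (hba : b * a = 1) :
    HasAdWeight h (-p) b := by
  unfold HasAdWeight at *
  calc ⁅h, b⁆ = -(b * ⁅h, a⁆ * b) := by
        simp only [Ring.lie_def, mul_sub, sub_mul, ← mul_assoc, hba, mul_assoc _ a b, hab]
        noncomm_ring
    _ = -p • b := by rw [ha, mul_smul_comm, smul_mul_assoc, hba, one_mul, neg_smul]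

theorem smul {S : Type*} [Monoid S] [DistribMulAction S R] [SMulCommClass S R R]
    [IsScalarTower S R R] (ha : HasAdWeight h p a) (c : S) : HasAdWeight h p (c • a) := by
  unfold HasAdWeight at *
  rw [Ring.lie_def, mul_smul_comm, smul_mul_assoc, ← smul_sub, ← Ring.lie_def, ha, smul_comm]

end HasAdWeight

theorem PowerSeries.lie_C_of_hasAdWeight_coeff {h : R} {f : R⟦X⟧} {p q : ℤ}
    (hf : ∀ n : ℕ, HasAdWeight h (p + n * q) (coeff n f)) :
    ⁅C h, f⁆ = p • f + q • (X * psDeriv f) := by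
  ext n
  rw [lie_C, X_mul_psDeriv, coeff_mk, hf n]
  simp only [map_add, map_zsmul, coeff_mk, add_smul, mul_comm (n : ℤ) q, mul_smul, natCast_zsmul]

end AdWeight

section Commutator

variable {R : Type*} [Ring R]

theorem lie_mul_add_mul_eq_two_smul {o c t y : R} (hoy : Commute o y) (hoc : ⁅o, c⁆ = t)
    (hty : t * y = o) (hyt : y * t = o) : ⁅o, c * y + y * c⁆ = 2 • o := by
  have hoc' : o * c = c * o + t := by rw [← hoc, Ring.lie_def]; abel
  have hocy : o * c * y = c * y * o + t * y := by
    rw [hoc', add_mul, mul_assoc, hoy.eq, ← mul_assoc]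
  have hoyc : o * (y * c) = y * c * o + y * t := by
    rw [← mul_assoc, hoy.eq, mul_assoc, hoc', mul_add, mul_assoc]
  calc ⁅o, c * y + y * c⁆ = o * c * y + o * (y * c) - (c * y + y * c) * o := by
        rw [Ring.lie_def, mul_add, mul_assoc]
    _ = t * y + y * t := by rw [hocy, hoyc]; noncomm_ring
    _ = 2 • o := by rw [hty, hyt, two_smul]

theorem lie_cube_add_linear_terms {o a x : R} (hao : Commute a o) (hox : ⁅o, x⁆ = -o) :
    ⁅o, a ^ 3 + a ^ 2 * x + a * x * a + x * a ^ 2⁆ = -3 • (a ^ 2 * o) := by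
  have hox' : o * x = x * o - o := by
    rw [Ring.lie_def, sub_eq_iff_eq_add] at hox; rw [hox]; abel
  have hoaz (z : R) : o * (a * z) = a * (o * z) := by rw [← mul_assoc, ← hao.eq, mul_assoc]
  have hoxz (z : R) : o * (x * z) = x * (o * z) - o * z := by
    rw [← mul_assoc, hox', sub_mul, mul_assoc]
  rw [Ring.lie_def]
  simp only [pow_succ, pow_zero, one_mul, mul_add, add_mul, mul_assoc, hoaz, hoxz, hox', hao.eq,
    mul_sub]
  abel

theorem PowerSeries.lie_neg_half_smul_anticomm_eq_neg [Algebra ℚ R] {O Y : R⟦X⟧} {h b : R}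
    (hO : ⁅C h, O⁆ = (1 - C b * X) * O) (hOb : Commute O (mk (b ^ ·)))
    (hY : Y = -mk (b ^ ·)) :
    ⁅O, -((1 / 2 : ℚ) • (C h * Y + Y * C h))⁆ = -O := by
  have hOh : ⁅O, C h⁆ = -((1 - C b * X) * O) := by
    rw [← hO, Ring.lie_def, Ring.lie_def, neg_sub]
  have hanti := lie_mul_add_mul_eq_two_smul (hY ▸ hOb.neg_right) hOh
    (by rw [hY, neg_mul_neg, mul_assoc, hOb.eq, ← mul_assoc, one_sub_C_mul_X_mul_mk_pow, one_mul])
    (by rw [hY, neg_mul_neg, ← mul_assoc, mk_pow_mul_one_sub_C_mul_X, one_mul])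
  calc ⁅O, -((1 / 2 : ℚ) • (C h * Y + Y * C h))⁆
        = -((1 / 2 : ℚ) • ⁅O, C h * Y + Y * C h⁆) := by
        simp only [Ring.lie_def, mul_neg, neg_mul, mul_smul_comm, smul_mul_assoc, smul_sub]
        abel
    _ = -O := by rw [hanti]; module

end Commutator

theorem lie_C_C_mul_expScaled {A : Type*} [Ring A] [Algebra ℚ A] {s si h : A}
    (hs : s * si = 1) (hs' : si * s = 1) (hh : HasAdWeight h 1 s) :
    ⁅C h, C s * expScaled (si ^ 2)⁆ = (1 - C (2 • si ^ 2) * X) * (C s * expScaled (si ^ 2)) := by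
  have hw (n : ℕ) : HasAdWeight h (1 + n * (2 * -1)) (coeff n (C s * expScaled (si ^ 2))) := by
    rw [coeff_C_mul_expScaled]
    exact (hh.mul (((hh.of_mul_eq_one hs hs').pow 2).pow n)).smul _
  have hXσ : X * C s * (C (si ^ 2) * expScaled (si ^ 2)) =
      C (si ^ 2) * X * (C s * expScaled (si ^ 2)) := by
    have hsσ : s * si ^ 2 = si ^ 2 * s :=
      ((show Commute s si from hs.trans hs'.symm).pow_right 2).eq
    rw [mul_assoc, ← mul_assoc (C s), ← map_mul, hsσ, map_mul, mul_assoc, ← mul_assoc X,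
      (commute_X _).eq]
  rw [lie_C_of_hasAdWeight_coeff hw, psDeriv_C_mul, psDeriv_expScaled, ← mul_assoc, hXσ, map_nsmul,
    sub_mul, one_mul, smul_mul_assoc, smul_mul_assoc]
  module

/-- with Φ = e^{u/s²}, O = s·Φ, Y the expansion of Z/(1−Z),
X = −(1/2)(h·Y + Y·h), E = (1/3)(X³ + s⁻¹X² + Xs⁻¹X + X²s⁻¹) and D̃ = s⁻¹ + X in A⟦u⟧,
one has [O, E − (1/3)D̃³] = s⁻¹·Φ, and s⁻¹·Φ equals the u-derivative of O; that is,
O satisfies the ODE dO/du = [O, E − (1/3)D̃³]. -/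
theorem dressed_operator_ODE (A : Type*) [Ring A] [Algebra ℚ A]
    (s si h : A)
    (hs : s * si = 1) (hs' : si * s = 1)
    (hh : h * s - s * h = s)
    (Φ O Y X E D : PowerSeries A)
    (hΦ : Φ = PowerSeries.mk fun n => ((1 : ℚ) / n.factorial) • si ^ (2 * n))
    (hO : O = PowerSeries.C s * Φ)
    (hY : Y = PowerSeries.mk fun n =>
      if n = 0 then -1 else -(((2 : ℚ) ^ n) • si ^ (2 * n)))
    (hX : X = -((1 / 2 : ℚ) • (PowerSeries.C h * Y + Y * PowerSeries.C h)))
    (hE : E = (1 / 3 : ℚ) • (X ^ 3 + PowerSeries.C si * X ^ 2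
      + X * PowerSeries.C si * X + X ^ 2 * PowerSeries.C si))
    (hD : D = PowerSeries.C si + X) :
    O * (E - (1 / 3 : ℚ) • D ^ 3) - (E - (1 / 3 : ℚ) • D ^ 3) * O
        = PowerSeries.C si * Φ ∧
      psDeriv O = PowerSeries.C si * Φ := by
  obtain rfl : Φ = expScaled (si ^ 2) := by simp only [hΦ, expScaled, pow_mul]
  subst hO
  have hssi : Commute s si := hs.trans hs'.symm
  have hY' : Y = -mk ((2 • si ^ 2) ^ ·) := by
    rw [hY]; ext (_ | n) <;> simp [smul_pow, pow_mul, ← Nat.cast_smul_eq_nsmul ℚ]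
  have hOX : ⁅C s * expScaled (si ^ 2), X⁆ = -(C s * expScaled (si ^ 2)) := by
    rw [hX]
    exact lie_neg_half_smul_anticomm_eq_neg
      (lie_C_C_mul_expScaled hs hs' (by rw [HasAdWeight, one_smul]; exact hh))
      (commute_C_mul_expScaled_mk_pow ((hssi.pow_right 2).smul_right 2)
        ((Commute.refl _).smul_right 2)) hY'
  have hB : E - (1 / 3 : ℚ) • D ^ 3 =
      -(1 / 3 : ℚ) • (C si ^ 3 + C si ^ 2 * X + C si * X * C si + X * C si ^ 2) := by
    rw [hE, hD, ← smul_sub, neg_smul, ← smul_neg]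
    congr 1
    noncomm_ring
  refine ⟨?_, ?_⟩
  · rw [← Ring.lie_def, hB, Ring.lie_def, mul_smul_comm, smul_mul_assoc, ← smul_sub,
      ← Ring.lie_def, lie_cube_add_linear_terms
        (commute_C_C_mul_expScaled hssi.symm ((Commute.refl si).pow_right 2)) hOX,
      ← map_pow, ← mul_assoc, ← map_mul, sq, mul_assoc, hs', mul_one]
    module
  · rw [psDeriv_C_mul, psDeriv_expScaled, ← mul_assoc, ← map_mul, sq, ← mul_assoc, hs, one_mul]
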